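/- arXiv:2306.14550 — 2 statements merged into one kernel-verified Lean document; each statement's English description precedes it below -/
import Mathlib

section
/- Let f : ℝ → ℂ be continuous and compactly supported. Then the squared L² norm of the time-focused transform of f satisfies ∫_{ℝ²} |M^τ f(t,ω)|² dt dω = ∫_{ℝ²} σ(t) |f(x)|² |h(σ(t)(x−t))|² dx dt. -/
/-!
For fixed `t`, the transform is a rescaled Fourier transform of the windowed signal
`g_t(x) = f(x) · conj h(σ(t)(x − t))`: `M^τ f(t, ω) = √(γ'(ω) σ(t)) · ĝ_t(γ(ω))`.
A continuous injective `γ` tending to `+∞` is increasing, so `γ' ≥ 0`; the substitution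
`u = γ(ω)` and Plancherel for `g_t ∈ L¹ ∩ L²` then give
`∫ |M^τ f(t, ω)|² dω = σ(t) ∫ |g_t|²` for every `t`.
Plancherel is transferred from `L²`: there the Fourier transform of `g_t` agrees a.e. with the
Fourier integral, since both define the same tempered distribution.
-/

open MeasureTheory Filter
open scoped FourierTransform Real

/-- Time-focused atom `h_{t,ω,σ}(x) = √(γ'(ω) σ(t)) e^{2πi γ(ω) x} h(σ(t)(x − t))`. -/
noncomputable def timeAtom (h : ℝ → ℂ) (γ σ : ℝ → ℝ) (t ω x : ℝ) : ℂ :=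
  (Real.sqrt (deriv γ ω * σ t) : ℂ) *
    Complex.exp (2 * (π : ℂ) * Complex.I * (γ ω : ℂ) * (x : ℂ)) *
    h (σ t * (x - t))

/-- Time-focused transform `M^τ f(t,ω) = ⟨f, h_{t,ω,σ}⟩_{L²}`. -/
noncomputable def timeTransform (h : ℝ → ℂ) (γ σ : ℝ → ℝ) (f : ℝ → ℂ) (t ω : ℝ) : ℂ :=
  ∫ x : ℝ, f x * (starRingEnd ℂ) (timeAtom h γ σ t ω x)

def timeWindowed (h : ℝ → ℂ) (σ : ℝ → ℝ) (f : ℝ → ℂ) (t x : ℝ) : ℂ :=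
  f x * (starRingEnd ℂ) (h (σ t * (x - t)))

theorem MeasureTheory.Lp.integral_norm_sq_eq_norm_sq {α E : Type*} [MeasurableSpace α]
    {μ : Measure α} [NormedAddCommGroup E] (f : Lp E 2 μ) :
    ∫ x, ‖f x‖ ^ 2 ∂μ = ‖f‖ ^ 2 := by
  have h := (Lp.memLp f).eLpNorm_eq_integral_rpow_norm two_ne_zero ENNReal.ofNat_ne_top
  have hnn : 0 ≤ ∫ x, ‖f x‖ ^ 2 ∂μ := integral_nonneg fun x ↦ by positivity
  simp only [ENNReal.toReal_ofNat, Real.rpow_two] at h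
  rw [Lp.norm_def, h, ENNReal.toReal_ofReal (by positivity), ← Real.rpow_natCast,
    ← Real.rpow_mul hnn]
  norm_num

section Plancherel

variable {V F : Type*} [NormedAddCommGroup V] [InnerProductSpace ℝ V] [FiniteDimensional ℝ V]
  [MeasurableSpace V] [BorelSpace V]
  [NormedAddCommGroup F] [InnerProductSpace ℂ F] [CompleteSpace F]

theorem SchwartzMap.integral_fourier_smul_eq_of_integrable (ψ : SchwartzMap V ℂ) {g : V → F}
    (hg : Integrable g) : ∫ x, 𝓕 ψ x • g x = ∫ ξ, ψ ξ • 𝓕 g ξ := by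
  have := VectorFourier.integral_fourierIntegral_smul_eq_flip (L := innerₗ V)
    Real.continuous_fourierChar continuous_inner (ψ.integrable (μ := volume)) hg
  rwa [flip_innerₗ] at this

theorem MeasureTheory.MemLp.fourier_toLp_ae_eq {g : V → F} (hg₁ : Integrable g)
    (hg₂ : MemLp g 2) :
    (𝓕 (hg₂.toLp g) : Lp F 2 (volume : Measure V)) =ᵐ[volume] 𝓕 g := by
  apply ae_eq_of_integral_contDiff_smul_eq
  · exact (Lp.memLp _).locallyIntegrable (by norm_num)
  · exact (VectorFourier.fourierIntegral_continuous Real.continuous_fourierChar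
      continuous_inner hg₁).locallyIntegrable
  intro φ hφ hφ_supp
  have hψ : HasCompactSupport (Complex.ofRealCLM ∘ φ) := hφ_supp.comp_left rfl
  set ψ := hψ.toSchwartzMap (Complex.ofRealCLM.contDiff.comp hφ)
  calc ∫ ξ, φ ξ • (𝓕 (hg₂.toLp g) : Lp F 2 (volume : Measure V)) ξ
      = Lp.toTemperedDistribution (𝓕 (hg₂.toLp g) : Lp F 2 (volume : Measure V)) ψ := by
        simp [ψ]
    _ = Lp.toTemperedDistribution (hg₂.toLp g) (𝓕 ψ) := by
        rw [← Lp.fourier_toTemperedDistribution_eq]; rfl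
    _ = ∫ x, 𝓕 ψ x • g x := by
        rw [Lp.toTemperedDistribution_apply]
        exact integral_congr_ae (by filter_upwards [hg₂.coeFn_toLp] with x hx; rw [hx])
    _ = ∫ ξ, φ ξ • 𝓕 g ξ := by
        rw [ψ.integral_fourier_smul_eq_of_integrable hg₁]
        simp [ψ]

theorem MeasureTheory.Integrable.integral_norm_sq_fourier {g : V → F} (hg₁ : Integrable g)
    (hg₂ : MemLp g 2) : ∫ ξ, ‖𝓕 g ξ‖ ^ 2 = ∫ x, ‖g x‖ ^ 2 := calc
  _ = ∫ ξ, ‖(𝓕 (hg₂.toLp g) : Lp F 2 (volume : Measure V)) ξ‖ ^ 2 :=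
      integral_congr_ae (by filter_upwards [hg₂.fourier_toLp_ae_eq hg₁] with ξ hξ; rw [hξ])
  _ = ∫ x, ‖hg₂.toLp g x‖ ^ 2 := by
      rw [Lp.integral_norm_sq_eq_norm_sq, Lp.integral_norm_sq_eq_norm_sq, Lp.norm_fourier_eq]
  _ = ∫ x, ‖g x‖ ^ 2 :=
      integral_congr_ae (by filter_upwards [hg₂.coeFn_toLp] with x hx; rw [hx])

end Plancherel

theorem Continuous.strictMono_of_injective_of_tendsto_atTop {α δ : Type*}
    [ConditionallyCompleteLinearOrder α] [TopologicalSpace α] [OrderTopology α]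
    [DenselyOrdered α] [NoMaxOrder α] [LinearOrder δ] [TopologicalSpace δ]
    [OrderClosedTopology δ] [NoMaxOrder δ] {f : α → δ} (hc : Continuous f)
    (hi : Function.Injective f) (htop : Tendsto f atTop atTop) : StrictMono f := by
  refine (hc.strictMono_of_inj hi).resolve_right fun hanti ↦ ?_
  obtain ⟨a⟩ : Nonempty α := inferInstance
  obtain ⟨b, hab, hfb⟩ := ((eventually_gt_atTop a).and (htop.eventually_gt_atTop (f a))).exists
  exact (hanti hab).not_gt hfb

theorem integral_deriv_smul_comp_of_monotone_of_surjective {E : Type*} [NormedAddCommGroup E]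
    [NormedSpace ℝ E] {γ : ℝ → ℝ} (hd : Differentiable ℝ γ) (hm : Monotone γ)
    (hs : Function.Surjective γ) (G : ℝ → E) :
    ∫ ω, deriv γ ω • G (γ ω) = ∫ u, G u := by
  have := integral_image_eq_integral_deriv_smul_of_monotoneOn MeasurableSet.univ
    (fun x _ ↦ (hd x).hasDerivAt.hasDerivWithinAt) (hm.monotoneOn _) G
  rwa [Set.image_univ, hs.range_eq, setIntegral_univ, setIntegral_univ, eq_comm] at this

open Complex in
theorem timeTransform_eq_sqrt_mul_fourier (h f : ℝ → ℂ) (γ σ : ℝ → ℝ) (t ω : ℝ) :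
    timeTransform h γ σ f t ω
      = (Real.sqrt (deriv γ ω * σ t) : ℂ) * 𝓕 (timeWindowed h σ f t) (γ ω) := by
  rw [timeTransform, Real.fourier_real_eq_integral_exp_smul, ← integral_const_mul]
  congr with x
  simp only [timeAtom, timeWindowed, map_mul, conj_ofReal, smul_eq_mul, ← exp_conj, conj_I,
    map_ofNat]
  rw [show 2 * (π : ℂ) * -I * γ ω * x = ((-2 * π * x * γ ω : ℝ) : ℂ) * I by push_cast; ring]
  ring

theorem norm_sq_timeTransform (h f : ℝ → ℂ) (γ σ : ℝ → ℝ) {t ω : ℝ} (hγ : 0 ≤ deriv γ ω)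
    (hσ : 0 ≤ σ t) :
    ‖timeTransform h γ σ f t ω‖ ^ 2
      = deriv γ ω * (σ t * ‖𝓕 (timeWindowed h σ f t) (γ ω)‖ ^ 2) := by
  rw [timeTransform_eq_sqrt_mul_fourier, norm_mul, mul_pow, Complex.norm_real,
    Real.norm_of_nonneg (Real.sqrt_nonneg _), Real.sq_sqrt (mul_nonneg hγ hσ), mul_assoc]

theorem stmt0_general (h f : ℝ → ℂ) (γ σ : ℝ → ℝ)
    (hh_cont : Continuous h) (hγ_smooth : ContDiff ℝ 1 γ) (hγ_bij : Function.Bijective γ)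
    (hγ_top : Tendsto γ atTop atTop) (hσ_ge : ∀ t, 1 ≤ σ t)
    (hf_cont : Continuous f) (hf_supp : HasCompactSupport f) :
    ∫ t : ℝ, ∫ ω : ℝ, ‖timeTransform h γ σ f t ω‖ ^ 2
      = ∫ t : ℝ, ∫ x : ℝ, σ t * ‖f x‖ ^ 2 * ‖h (σ t * (x - t))‖ ^ 2 := by
  have hγ_diff : Differentiable ℝ γ := hγ_smooth.differentiable one_ne_zero
  have hγ_mono : Monotone γ :=
    (hγ_diff.continuous.strictMono_of_injective_of_tendsto_atTop hγ_bij.1 hγ_top).monotone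
  congr with t
  have hσ : 0 ≤ σ t := zero_le_one.trans (hσ_ge t)
  have hg_cont : Continuous (timeWindowed h σ f t) := by unfold timeWindowed; fun_prop
  have hg_supp : HasCompactSupport (timeWindowed h σ f t) := hf_supp.mul_right
  calc ∫ ω, ‖timeTransform h γ σ f t ω‖ ^ 2
      = ∫ ω, deriv γ ω • (σ t * ‖𝓕 (timeWindowed h σ f t) (γ ω)‖ ^ 2) := by
        congr with ω
        exact norm_sq_timeTransform h f γ σ hγ_mono.deriv_nonneg hσ
    _ = σ t * ∫ u, ‖𝓕 (timeWindowed h σ f t) u‖ ^ 2 := by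
        rw [integral_deriv_smul_comp_of_monotone_of_surjective hγ_diff hγ_mono hγ_bij.2
          (fun u ↦ σ t * ‖𝓕 (timeWindowed h σ f t) u‖ ^ 2), integral_const_mul]
    _ = σ t * ∫ x, ‖timeWindowed h σ f t x‖ ^ 2 := by
        rw [(hg_cont.integrable_of_hasCompactSupport hg_supp).integral_norm_sq_fourier
          (hg_cont.memLp_of_hasCompactSupport hg_supp)]
    _ = ∫ x, σ t * ‖f x‖ ^ 2 * ‖h (σ t * (x - t))‖ ^ 2 := by
        rw [← integral_const_mul]
        congr with x
        rw [timeWindowed, norm_mul, RCLike.norm_conj]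
        ring

theorem stmt0 (h f : ℝ → ℂ) (γ σ : ℝ → ℝ)
    (hh_cont : Continuous h) (hh_supp : HasCompactSupport h) (hh_ne : h ≠ 0)
    (hγ_smooth : ContDiff ℝ 1 γ) (hγ_odd : ∀ t, γ (-t) = -γ t)
    (hγ_bij : Function.Bijective γ) (hγ_deriv : ∀ t, deriv γ t ≠ 0)
    (hγ_bot : Tendsto γ atBot atBot) (hγ_top : Tendsto γ atTop atTop)
    (hσ_cont : Continuous σ) (hσ_ge : ∀ t, 1 ≤ σ t)
    (hσ_top : Tendsto σ atTop (nhds 1)) (hσ_bot : Tendsto σ atBot (nhds 1))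
    (hf_cont : Continuous f) (hf_supp : HasCompactSupport f) :
    ∫ t : ℝ, ∫ ω : ℝ, ‖timeTransform h γ σ f t ω‖ ^ 2
      = ∫ t : ℝ, ∫ x : ℝ, σ t * ‖f x‖ ^ 2 * ‖h (σ t * (x - t))‖ ^ 2 :=
  stmt0_general h f γ σ hh_cont hγ_smooth hγ_bij hγ_top hσ_ge hf_cont hf_supp
end

section
/- Define c = inf_{t∈ℝ} ∫_ℝ |h(x σ(x+t))|² dx. Then c > 0, and the inverse Fourier transform of the kernel, given by (F⁻¹ K_σ)(t) = ∫_ℝ σ(x) |h(σ(x)(x − t))|² dx, satisfies (F⁻¹ K_σ)(t) ≥ c for every t ∈ ℝ. -/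
/-!
Write `u = ‖h‖²` and `F t = ∫ u (x σ(x + t)) dx`. Since `σ ≥ 1`, the dilation `x ↦ x σ(x + t)`
only enlarges `|x|`, so every `x ↦ u (x σ(x + t))` vanishes outside one fixed ball and is bounded
by `sup u`: dominated convergence makes `F` continuous with `F t → ∫ u > 0` as `t → ±∞`. The
dilation is onto, so each `F t > 0`, and a continuous positive function staying above a positive
constant off a compact set has a positive infimum. The comparison with `F⁻¹ K_σ` is the shift
`x ↦ x - t` followed by `σ ≥ 1` once more.
-/

open MeasureTheory Filter Topology Metric Set Function

lemma abs_le_abs_mul_of_one_le_abs {x s : ℝ} (hs : 1 ≤ |s|) : |x| ≤ |x * s| := by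
  rw [abs_mul]
  exact le_mul_of_one_le_right (abs_nonneg x) hs

lemma surjective_mul_self_of_one_le {g : ℝ → ℝ} (hg : Continuous g) (hg_one : ∀ x, 1 ≤ g x) :
    Surjective fun x => x * g x := by
  have hcont : Continuous fun x => x * g x := continuous_id.mul hg
  refine hcont.surjective ?_ ?_
  · refine tendsto_atTop_mono' _ ?_ tendsto_id
    filter_upwards [eventually_ge_atTop 0] with x hx
    exact le_mul_of_one_le_right hx (hg_one x)
  · refine tendsto_atBot_mono' _ ?_ tendsto_id
    filter_upwards [eventually_le_atBot 0] with x hx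
    exact mul_le_of_one_le_right hx (hg_one x)

lemma Continuous.exists_pos_le_of_eventually_le {X : Type*} [TopologicalSpace X] {f : X → ℝ}
    (hf : Continuous f) (hf_pos : ∀ x, 0 < f x) {ε : ℝ} (hε : 0 < ε)
    (hf_ε : ∀ᶠ x in cocompact X, ε ≤ f x) : ∃ c, 0 < c ∧ ∀ x, c ≤ f x := by
  by_cases hlow : ∃ x₀, f x₀ ≤ ε
  · obtain ⟨x₀, hx₀⟩ := hlow
    obtain ⟨x, hx⟩ := hf.exists_forall_le' x₀ (hf_ε.mono fun y hy => hx₀.trans hy)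
    exact ⟨f x, hf_pos x, hx⟩
  · simp only [not_exists, not_le] at hlow
    exact ⟨ε, hε, fun x => (hlow x).le⟩

section Dilation

variable {E : Type*} [NormedAddCommGroup E] {u : ℝ → E}

lemma HasCompactSupport.exists_support_subset_closedBall (hu : HasCompactSupport u) :
    ∃ R, support u ⊆ closedBall 0 R :=
  let ⟨R, hR⟩ := hu.isCompact.isBounded.subset_closedBall 0
  ⟨R, (subset_tsupport u).trans hR⟩

lemma apply_mul_eq_zero_of_support_subset {R : ℝ} (hR : support u ⊆ closedBall 0 R) {x s : ℝ}
    (hs : 1 ≤ |s|) (hx : x ∉ closedBall 0 R) : u (x * s) = 0 := by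
  by_contra hne
  apply hx
  have hxs := hR hne
  rw [mem_closedBall_zero_iff, Real.norm_eq_abs] at hxs ⊢
  exact (abs_le_abs_mul_of_one_le_abs hs).trans hxs

lemma norm_apply_mul_le_indicator {R C : ℝ} (hR : support u ⊆ closedBall 0 R)
    (hC : ∀ y, ‖u y‖ ≤ C) {s : ℝ} (hs : 1 ≤ |s|) (x : ℝ) :
    ‖u (x * s)‖ ≤ (closedBall (0 : ℝ) R).indicator (fun _ => C) x := by
  by_cases hx : x ∈ closedBall 0 R
  · rw [indicator_of_mem hx]
    exact hC _
  · rw [indicator_of_notMem hx, apply_mul_eq_zero_of_support_subset hR hs hx, norm_zero]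

lemma HasCompactSupport.comp_mul_self_of_one_le_abs (hu : HasCompactSupport u) {g : ℝ → ℝ}
    (hg : ∀ x, 1 ≤ |g x|) : HasCompactSupport fun x => u (x * g x) := by
  obtain ⟨R, hR⟩ := hu.exists_support_subset_closedBall
  exact .intro (isCompact_closedBall 0 R) fun x hx =>
    apply_mul_eq_zero_of_support_subset hR (hg x) hx

variable [NormedSpace ℝ E]

theorem tendsto_integral_comp_mul_self (hu : Continuous u)
    (hu_supp : HasCompactSupport u) {ι : Type*} {l : Filter ι} [l.IsCountablyGenerated]
    {g : ι → ℝ → ℝ} {g₀ : ℝ → ℝ} (hg : ∀ i, Continuous (g i)) (hg_one : ∀ i x, 1 ≤ |g i x|)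
    (hg₀ : ∀ x, Tendsto (fun i => g i x) l (𝓝 (g₀ x))) :
    Tendsto (fun i => ∫ x, u (x * g i x)) l (𝓝 (∫ x, u (x * g₀ x))) := by
  obtain ⟨R, hR⟩ := hu_supp.exists_support_subset_closedBall
  obtain ⟨C, hC⟩ := hu.bounded_above_of_compact_support hu_supp
  refine tendsto_integral_filter_of_dominated_convergence
    ((closedBall (0 : ℝ) R).indicator fun _ => C)
    (.of_forall fun i => (hu.comp (continuous_id.mul (hg i))).aestronglyMeasurable)
    (.of_forall fun i => .of_forall fun x => norm_apply_mul_le_indicator hR hC (hg_one i x) x)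
    ((integrable_indicator_iff measurableSet_closedBall).2
      (integrableOn_const measure_closedBall_lt_top.ne))
    (.of_forall fun x => (hu.tendsto _).comp (tendsto_const_nhds.mul (hg₀ x)))

theorem continuous_integral_comp_mul_shift (hu : Continuous u)
    (hu_supp : HasCompactSupport u) {σ : ℝ → ℝ} (hσ : Continuous σ) (hσ_one : ∀ x, 1 ≤ |σ x|) :
    Continuous fun t => ∫ x, u (x * σ (x + t)) :=
  continuous_iff_continuousAt.2 fun t =>
    tendsto_integral_comp_mul_self hu hu_supp (fun s => hσ.comp (continuous_add_const s))
      (fun _ _ => hσ_one _) fun x => (hσ.comp (continuous_const_add x)).tendsto t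

theorem tendsto_integral_comp_mul_shift_cocompact (hu : Continuous u)
    (hu_supp : HasCompactSupport u) {σ : ℝ → ℝ} (hσ : Continuous σ) (hσ_one : ∀ x, 1 ≤ |σ x|)
    (hσ_top : Tendsto σ atTop (𝓝 1)) (hσ_bot : Tendsto σ atBot (𝓝 1)) :
    Tendsto (fun t => ∫ x, u (x * σ (x + t))) (cocompact ℝ) (𝓝 (∫ x, u x)) := by
  have hlim (l : Filter ℝ) [l.IsCountablyGenerated] (hl : Tendsto σ l (𝓝 1))
      (hshift : ∀ x, Tendsto (x + ·) l l) :
      Tendsto (fun t => ∫ x, u (x * σ (x + t))) l (𝓝 (∫ x, u x)) := by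
    simpa using tendsto_integral_comp_mul_self (g₀ := fun _ => 1) hu hu_supp
      (fun s => hσ.comp (continuous_add_const s)) (fun _ _ => hσ_one _)
      fun x => hl.comp (hshift x)
  rw [cocompact_eq_atBot_atTop]
  exact (hlim atBot hσ_bot fun x => tendsto_atBot_add_const_left _ x tendsto_id).sup
    (hlim atTop hσ_top fun x => tendsto_atTop_add_const_left _ x tendsto_id)

end Dilation

section Nonneg

variable {u : ℝ → ℝ} {g : ℝ → ℝ}

lemma integral_comp_mul_self_pos (hu : Continuous u) (hu_supp : HasCompactSupport u)
    (hu_nonneg : 0 ≤ u) (hu_ne : u ≠ 0) (hg : Continuous g) (hg_one : ∀ x, 1 ≤ g x) :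
    0 < ∫ x, u (x * g x) := by
  obtain ⟨y, hy⟩ := Function.ne_iff.1 hu_ne
  obtain ⟨x, rfl⟩ := surjective_mul_self_of_one_le hg hg_one y
  exact (hu.comp (continuous_id.mul hg)).integral_pos_of_hasCompactSupport_nonneg_nonzero
    (hu_supp.comp_mul_self_of_one_le_abs fun x => (hg_one x).trans (le_abs_self _))
    (fun x => hu_nonneg (x * g x)) hy

lemma integral_comp_mul_self_le (hu : Continuous u) (hu_supp : HasCompactSupport u)
    (hu_nonneg : 0 ≤ u) (hg : Continuous g) (hg_one : ∀ x, 1 ≤ g x) :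
    ∫ x, u (x * g x) ≤ ∫ x, g x * u (x * g x) := by
  have hsupp := hu_supp.comp_mul_self_of_one_le_abs fun x => (hg_one x).trans (le_abs_self _)
  refine integral_mono_of_nonneg (.of_forall fun x => hu_nonneg (x * g x)) ?_
    (.of_forall fun x => le_mul_of_one_le_left (hu_nonneg _) (hg_one x))
  exact (hg.mul (hu.comp (continuous_id.mul hg))).integrable_of_hasCompactSupport hsupp.mul_left

lemma integral_comp_mul_shift_le (hu : Continuous u) (hu_supp : HasCompactSupport u)
    (hu_nonneg : 0 ≤ u) {σ : ℝ → ℝ} (hσ : Continuous σ) (hσ_one : ∀ x, 1 ≤ σ x) (t : ℝ) :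
    ∫ x, u (x * σ (x + t)) ≤ ∫ x, σ x * u (σ x * (x - t)) := calc
  ∫ x, u (x * σ (x + t)) ≤ ∫ x, σ (x + t) * u (x * σ (x + t)) :=
    integral_comp_mul_self_le hu hu_supp hu_nonneg (hσ.comp (continuous_add_const t))
      fun x => hσ_one _
  _ = ∫ x, σ x * u (σ x * (x - t)) := by
    rw [← integral_add_right_eq_self (fun x => σ x * u (σ x * (x - t))) t]
    congr with x
    rw [add_sub_cancel_right, mul_comm x]

end Nonneg

theorem stmt9 (h : ℝ → ℂ) (σ : ℝ → ℝ)
    (hh_cont : Continuous h) (hh_supp : HasCompactSupport h) (hh_ne : h ≠ 0)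
    (hσ_cont : Continuous σ) (hσ_ge : ∀ t, 1 ≤ σ t)
    (hσ_top : Tendsto σ atTop (nhds 1)) (hσ_bot : Tendsto σ atBot (nhds 1)) :
    (0 < ⨅ t : ℝ, ∫ x : ℝ, ‖h (x * σ (x + t))‖ ^ 2) ∧
    ∀ t : ℝ, (⨅ s : ℝ, ∫ x : ℝ, ‖h (x * σ (x + s))‖ ^ 2)
      ≤ ∫ x : ℝ, σ x * ‖h (σ x * (x - t))‖ ^ 2 := by
  set u : ℝ → ℝ := fun y => ‖h y‖ ^ 2
  have hu : Continuous u := hh_cont.norm.pow 2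
  have hu_supp : HasCompactSupport u := hh_supp.comp_left (g := fun z : ℂ => ‖z‖ ^ 2) (by simp)
  have hu_nonneg : 0 ≤ u := fun y => sq_nonneg _
  have hu_ne : u ≠ 0 := fun hu0 => hh_ne (funext fun y => by simpa [u] using congr_fun hu0 y)
  have hσ_one : ∀ x, 1 ≤ |σ x| := fun x => (hσ_ge x).trans (le_abs_self _)
  have hF_pos (t : ℝ) : 0 < ∫ x, u (x * σ (x + t)) :=
    integral_comp_mul_self_pos hu hu_supp hu_nonneg hu_ne (hσ_cont.comp (continuous_add_const t))
      fun x => hσ_ge _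
  have hu_int_pos : 0 < ∫ y, u y := by
    simpa using integral_comp_mul_self_pos hu hu_supp hu_nonneg hu_ne continuous_const
      fun _ => le_refl (1 : ℝ)
  obtain ⟨c, hc, hcF⟩ := (continuous_integral_comp_mul_shift hu hu_supp hσ_cont hσ_one)
    |>.exists_pos_le_of_eventually_le hF_pos (half_pos hu_int_pos)
    ((tendsto_integral_comp_mul_shift_cocompact hu hu_supp hσ_cont hσ_one hσ_top hσ_bot).eventually
      (eventually_ge_nhds (half_lt_self hu_int_pos)))
  refine ⟨hc.trans_le (le_ciInf hcF), fun t => ?_⟩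
  exact (ciInf_le ⟨0, by rintro _ ⟨s, rfl⟩; exact (hF_pos s).le⟩ t).trans
    (integral_comp_mul_shift_le hu hu_supp hu_nonneg hσ_cont hσ_ge t)
end
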